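/- arXiv:1309.6190 — 5 statements merged into one kernel-verified Lean document; each statement's English description precedes it below -/
import Mathlib

section
/- Suppose a, b ≥ 1 are integers with 2a dividing b² + 1 and b dividing 2a² + 1, and b < √2·a. Set a' = (b² + 1)/(2a) and b' = b. Then 2a' divides b'² + 1 and b' divides 2a'² + 1. -/
/-- If `a, b ≥ 1` with `2a ∣ b² + 1`, `b ∣ 2a² + 1` and `b < √2·a`, then setting
`a' = (b² + 1)/(2a)` and `b' = b`, we again have `2a' ∣ b'² + 1` and `b' ∣ 2a'² + 1`. -/
theorem pell_step (a b : ℕ) (ha : 1 ≤ a) (hb : 1 ≤ b)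
    (h1 : 2 * a ∣ b ^ 2 + 1) (h2 : b ∣ 2 * a ^ 2 + 1)
    (hlt : b ^ 2 < 2 * a ^ 2) :
    2 * ((b ^ 2 + 1) / (2 * a)) ∣ b ^ 2 + 1 ∧
      b ∣ 2 * ((b ^ 2 + 1) / (2 * a)) ^ 2 + 1 := by
  set c := (b ^ 2 + 1) / (2 * a) with hcdef
  have hc : 2 * a * c = b ^ 2 + 1 := Nat.mul_div_cancel' h1
  constructor
  · exact ⟨a, by linarith [hc, mul_comm a c]⟩
  · have hcop : Nat.Coprime b (2 * a ^ 2) := by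
      have : Nat.gcd b (2 * a ^ 2) ∣ 1 := by
        have h1' : Nat.gcd b (2 * a ^ 2) ∣ 2 * a ^ 2 + 1 := (Nat.gcd_dvd_left _ _).trans h2
        exact (Nat.dvd_add_right (Nat.gcd_dvd_right b (2 * a ^ 2))).mp h1'
      exact Nat.eq_one_of_dvd_one this
    have hdvd : b ∣ 2 * a ^ 2 * (2 * c ^ 2 + 1) := by
      have key : 2 * a ^ 2 * (2 * c ^ 2 + 1) = b ^ 2 * (b ^ 2 + 2) + (2 * a ^ 2 + 1) := by
        have : (2 * a * c) ^ 2 = (b ^ 2 + 1) ^ 2 := by rw [hc]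
        ring_nf
        ring_nf at this
        linarith
      rw [key]
      exact Dvd.dvd.add (Dvd.dvd.mul_right (dvd_pow_self b two_ne_zero) _) h2
    exact (Nat.Coprime.dvd_of_dvd_mul_left hcop hdvd)
end

section
/- There are no integers a > 1, b > 1 with 2a dividing b² + 1, b dividing 2a² + 1, and such that (2a² + b²) · (4a⁴ + b⁴) divides (2a²b² + 1) · (4a⁴b⁴ + 1). -/
/-- No solutions to the negative Pell-type equation `c² + 1 = (ℓ²-2)a²` when `ℓ ≥ 3`. -/
lemma no_neg_pell (ℓ : ℤ) (hℓ : 3 ≤ ℓ) :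
    ∀ a : ℕ, 0 < a → ∀ c : ℤ, c ^ 2 + 1 = (ℓ ^ 2 - 2) * (a : ℤ) ^ 2 → False := by
  intro a
  induction a using Nat.strong_induction_on with
  | _ a ih =>
    intro ha c hc
    set d : ℤ := |c| with hdDef
    have hd0 : 0 ≤ d := abs_nonneg c
    have hd2 : d ^ 2 + 1 = (ℓ ^ 2 - 2) * (a : ℤ) ^ 2 := by
      rw [hdDef, sq_abs]; exact hc
    have haZ : (1 : ℤ) ≤ (a : ℤ) := by exact_mod_cast ha
    have key1 : ((ℓ ^ 2 - 1) * (a : ℤ)) ^ 2 = (ℓ * d) ^ 2 + (a : ℤ) ^ 2 + ℓ ^ 2 := by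
      linear_combination (-(ℓ ^ 2)) * hd2
    have key2 : (ℓ * d) ^ 2 = ((ℓ ^ 2 - 2) * (a : ℤ)) ^ 2 + (2 * (ℓ ^ 2 - 2) * (a : ℤ) ^ 2 - ℓ ^ 2) := by
      linear_combination (ℓ ^ 2) * hd2
    have hposA : (0 : ℤ) ≤ (ℓ ^ 2 - 2) * (a : ℤ) := by nlinarith
    have hposB : (0 : ℤ) ≤ ℓ * d := by positivity
    have hposC : (0 : ℤ) ≤ (ℓ ^ 2 - 1) * (a : ℤ) := by nlinarith
    -- (ℓ²-2)a < ℓd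
    have hℓ9 : (9 : ℤ) ≤ ℓ ^ 2 := by nlinarith
    have ha1 : (1 : ℤ) ≤ (a : ℤ) ^ 2 := by nlinarith
    have hprod : (0 : ℤ) ≤ (ℓ ^ 2 - 2) * ((a : ℤ) ^ 2 - 1) :=
      mul_nonneg (by linarith) (by linarith)
    have hM : ℓ ^ 2 < 2 * (ℓ ^ 2 - 2) * (a : ℤ) ^ 2 := by nlinarith [hprod]
    have h1 : (ℓ ^ 2 - 2) * (a : ℤ) < ℓ * d := by nlinarith [key2, hposA, hposB, hM]
    -- ℓd < (ℓ²-1)a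
    have h2 : ℓ * d < (ℓ ^ 2 - 1) * (a : ℤ) := by nlinarith
    set a' : ℤ := (ℓ ^ 2 - 1) * (a : ℤ) - ℓ * d with ha'Def
    have ha'pos : 0 < a' := by simp only [ha'Def]; linarith
    have ha'lt : a' < (a : ℤ) := by simp only [ha'Def]; linarith
    obtain ⟨n, hn⟩ : ∃ n : ℕ, (n : ℤ) = a' := ⟨a'.toNat, Int.toNat_of_nonneg ha'pos.le⟩
    have hnlt : n < a := by exact_mod_cast hn ▸ ha'lt
    have hnpos : 0 < n := by exact_mod_cast hn ▸ ha'pos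
    exact ih n hnlt hnpos ((ℓ ^ 2 - 1) * d - ℓ * (ℓ ^ 2 - 2) * (a : ℤ)) (by
      rw [hn]
      linear_combination ((ℓ ^ 2 - 1) ^ 2 - ℓ ^ 2 * (ℓ ^ 2 - 2)) * hd2)

/-- There are no integers `a > 1`, `b > 1` with `2a ∣ b² + 1`, `b ∣ 2a² + 1`, and
`(2a² + b²)(4a⁴ + b⁴) ∣ (2a²b² + 1)(4a⁴b⁴ + 1)`. -/
theorem no_octagon_anisotropic_params :
    ¬ ∃ a b : ℕ, 1 < a ∧ 1 < b ∧ (2 * a ∣ b ^ 2 + 1) ∧ (b ∣ 2 * a ^ 2 + 1) ∧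
      ((2 * a ^ 2 + b ^ 2) * (4 * a ^ 4 + b ^ 4) ∣
        (2 * a ^ 2 * b ^ 2 + 1) * (4 * a ^ 4 * b ^ 4 + 1)) := by
  rintro ⟨a, b, ha, hb, hda, hdb, hbig⟩
  -- b is odd
  have hbodd : ¬ (2 ∣ b) := by
    intro h2b
    have : (2 : ℕ) ∣ 2 * a ^ 2 + 1 := dvd_trans h2b hdb
    obtain ⟨k, hk⟩ := this
    set x := a ^ 2
    omega
  -- gcd (2a) b = 1
  have hco : Nat.Coprime (2 * a) b := by
    have hg1 : Nat.gcd (2 * a) b ∣ b ^ 2 + 1 := dvd_trans (Nat.gcd_dvd_left _ _) hda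
    have hg2 : Nat.gcd (2 * a) b ∣ b ^ 2 := dvd_pow (Nat.gcd_dvd_right _ _) two_ne_zero
    have := Nat.dvd_sub hg1 hg2
    rw [Nat.add_sub_cancel_left] at this
    exact Nat.dvd_one.mp this
  -- 2ab ∣ 2a² + b² + 1
  have hd2a : 2 * a ∣ 2 * a ^ 2 + b ^ 2 + 1 := by
    have h1 : 2 * a ∣ 2 * a ^ 2 := ⟨a, by ring⟩
    have := Nat.dvd_add h1 hda
    rwa [← add_assoc] at this
  have hdbb : b ∣ 2 * a ^ 2 + b ^ 2 + 1 := by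
    have := Nat.dvd_add hdb (dvd_pow_self b (two_ne_zero))
    rwa [show 2 * a ^ 2 + 1 + b ^ 2 = 2 * a ^ 2 + b ^ 2 + 1 from by ring] at this
  obtain ⟨ℓ, hL⟩ := hco.mul_dvd_of_dvd_of_dvd hd2a hdbb
  have hLz : 2 * (a : ℤ) ^ 2 + (b : ℤ) ^ 2 + 1 = 2 * a * b * ℓ := by exact_mod_cast hL
  have haZ : (2 : ℤ) ≤ (a : ℤ) := by exact_mod_cast ha
  have hbZ : (2 : ℤ) ≤ (b : ℤ) := by exact_mod_cast hb
  -- ℓ ≥ 2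
  have hℓ2 : 2 ≤ ℓ := by
    by_contra hc
    push_neg at hc
    interval_cases ℓ <;> nlinarith [sq_nonneg ((a : ℤ) - b)]
  rcases lt_or_ge ℓ 3 with h3 | h3
  · -- ℓ = 2 case
    have hℓeq : ℓ = 2 := by omega
    subst hℓeq
    have hu : 4 * (a : ℤ) * b = (2 * (a : ℤ) ^ 2 + (b : ℤ) ^ 2) + 1 := by linarith
    have hσN : (2 * a ^ 2 + b ^ 2) ∣ (2 * a ^ 2 * b ^ 2 + 1) * (4 * a ^ 4 * b ^ 4 + 1) :=
      dvd_trans (dvd_mul_right _ _) hbig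
    have hσNZ : (2 * (a : ℤ) ^ 2 + (b : ℤ) ^ 2) ∣
        (2 * (a : ℤ) ^ 2 * b ^ 2 + 1) * (4 * (a : ℤ) ^ 4 * b ^ 4 + 1) := by exact_mod_cast hσN
    set S : ℤ := 2 * (a : ℤ) ^ 2 + (b : ℤ) ^ 2 with hSdef
    have h1 : S ∣ 4096 * ((2 * (a : ℤ) ^ 2 * b ^ 2 + 1) * (4 * (a : ℤ) ^ 4 * b ^ 4 + 1)) :=
      Dvd.dvd.mul_left hσNZ 4096
    have h2 : 4096 * ((2 * (a : ℤ) ^ 2 * b ^ 2 + 1) * (4 * (a : ℤ) ^ 4 * b ^ 4 + 1)) =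
        (2 * (S + 1) ^ 2 + 16) * (4 * (S + 1) ^ 4 + 256) := by
      rw [← hu]; ring
    have h3' : S ∣ (2 * (S + 1) ^ 2 + 16) * (4 * (S + 1) ^ 4 + 256) - 4680 :=
      ⟨8 * S ^ 5 + 48 * S ^ 4 + 184 * S ^ 3 + 416 * S ^ 2 + 1016 * S + 1328, by ring⟩
    have hS4680 : S ∣ 4680 := by
      have := dvd_sub (h2 ▸ h1) h3'
      simpa using this
    have hN4680 : (2 * a ^ 2 + b ^ 2) ∣ 4680 := by
      rw [hSdef] at hS4680; exact_mod_cast hS4680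
    -- σ is odd, so σ ∣ 585
    have hbo : Odd b := Nat.odd_iff.mpr (by omega)
    have hσodd : Odd (2 * a ^ 2 + b ^ 2) := (even_two_mul (a ^ 2)).add_odd (hbo.pow)
    have hcop8 : Nat.Coprime (2 * a ^ 2 + b ^ 2) 8 := by
      have h2' : Nat.Coprime (2 * a ^ 2 + b ^ 2) 2 := by
        exact hσodd.coprime_two_right
      have := h2'.pow_right 3
      norm_num at this ⊢
      exact this
    have h585 : (2 * a ^ 2 + b ^ 2) ∣ 585 := by
      refine hcop8.dvd_of_dvd_mul_right ?_
      rwa [show (585 * 8 : ℕ) = 4680 from by norm_num]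
    have hle : 2 * a ^ 2 + b ^ 2 ≤ 585 := Nat.le_of_dvd (by norm_num) h585
    have ha17 : a ≤ 17 := by nlinarith
    have hb24 : b ≤ 24 := by nlinarith
    rw [pow_two, pow_two] at h585 hL
    clear hbig hσN hσNZ h1 h2 h3' hS4680 hN4680 hu hLz hσodd hcop8 hbo hle hda hdb hd2a hdbb hbodd hco haZ hbZ hℓ2
    interval_cases a <;> interval_cases b <;> omega
  · -- ℓ ≥ 3 : impossible by the Pell descent
    exact no_neg_pell (ℓ : ℤ) (by exact_mod_cast h3) a (by omega) ((ℓ : ℤ) * a - b)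
      (by linear_combination hLz)
end

section
/- For every integer n ≥ 1, setting s = F_{2n-1}² and t = F_{2n+1}² (Fibonacci numbers), the quantity 21(6F_{2n}² + 11)/((4F_{2n}² + 3)(2F_{2n}² + 1)) is a positive integer only when n = 1. -/
/-- For `n ≥ 1`, the quantity `21(6F_{2n}² + 11)/((4F_{2n}² + 3)(2F_{2n}² + 1))` is a
positive integer only when `n = 1`, where `F` is the Fibonacci sequence. -/
theorem fib_hexagon_divisibility (n : ℕ) (hn : 1 ≤ n)
    (hdvd : (4 * Nat.fib (2 * n) ^ 2 + 3) * (2 * Nat.fib (2 * n) ^ 2 + 1) ∣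
      21 * (6 * Nat.fib (2 * n) ^ 2 + 11)) :
    n = 1 := by
  by_contra h
  have h2 : 2 ≤ n := by omega
  rcases Nat.eq_or_lt_of_le h2 with h2 | h3
  · subst h2
    norm_num [Nat.fib] at hdvd
  · have h8 : 8 ≤ Nat.fib (2 * n) := by
      calc 8 = Nat.fib 6 := by norm_num
      _ ≤ Nat.fib (2 * n) := Nat.fib_mono (by omega)
    have hle := Nat.le_of_dvd (by positivity) hdvd
    have hx2 : 64 ≤ Nat.fib (2 * n) ^ 2 := by nlinarith
    nlinarith [Nat.mul_le_mul hx2 hx2]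
end

section
/- No collineation of a thick generalised (2n+1)-gon is domestic. -/
open SimpleGraph

/-- The incidence graph of a point-line geometry, on vertex set `P ⊕ L`. -/
def incGraph {P L : Type*} (inc : P → L → Prop) : SimpleGraph (P ⊕ L) where
  Adj x y := (∃ p l, x = Sum.inl p ∧ y = Sum.inr l ∧ inc p l) ∨
             (∃ p l, x = Sum.inr l ∧ y = Sum.inl p ∧ inc p l)
  symm := by
    constructor
    rintro x y (⟨p, l, rfl, rfl, h⟩ | ⟨p, l, rfl, rfl, h⟩)
    · exact Or.inr ⟨p, l, rfl, rfl, h⟩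
    · exact Or.inl ⟨p, l, rfl, rfl, h⟩
  loopless := by
    constructor
    rintro x (⟨p, l, rfl, h, _⟩ | ⟨p, l, rfl, h, _⟩) <;> simp at h

/-- A (weak) generalised `n`-gon: the incidence graph is connected, has diameter `n` and
girth `2n`. -/
structure IsGenPolygon {P L : Type*} (n : ℕ) (inc : P → L → Prop) : Prop where
  connected : (incGraph inc).Connected
  dist_le : ∀ x y : P ⊕ L, (incGraph inc).dist x y ≤ n
  exists_dist_eq : ∃ x y : P ⊕ L, (incGraph inc).dist x y = n
  girth_eq : (incGraph inc).girth = (2 * n : ℕ)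

/-- Thickness: every point is on at least three lines and every line carries at least three
points. -/
def IsThick {P L : Type*} (inc : P → L → Prop) : Prop :=
  (∀ p : P, ∃ l₁ l₂ l₃ : L, inc p l₁ ∧ inc p l₂ ∧ inc p l₃ ∧ l₁ ≠ l₂ ∧ l₁ ≠ l₃ ∧ l₂ ≠ l₃) ∧
  (∀ l : L, ∃ p₁ p₂ p₃ : P, inc p₁ l ∧ inc p₂ l ∧ inc p₃ l ∧ p₁ ≠ p₂ ∧ p₁ ≠ p₃ ∧ p₂ ≠ p₃)

/-- The geometry has parameters `(s, t)`: each line carries `s + 1` points and each point is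
on `t + 1` lines. -/
def HasParams {P L : Type*} (inc : P → L → Prop) (s t : ℕ) : Prop :=
  (∀ l : L, Nat.card {p : P // inc p l} = s + 1) ∧
  (∀ p : P, Nat.card {l : L // inc p l} = t + 1)

/-- A collineation: a pair of permutations of the points and the lines preserving
incidence. -/
def IsCollineation {P L : Type*} (inc : P → L → Prop) (θP : Equiv.Perm P)
    (θL : Equiv.Perm L) : Prop :=
  ∀ p l, inc p l ↔ inc (θP p) (θL l)

/-- Two chambers `{p, l}` and `{p', l'}` of a generalised `m`-gon are opposite. -/
def OppChambers {P L : Type*} (inc : P → L → Prop) (m : ℕ)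
    (p p' : P) (l l' : L) : Prop :=
  ((incGraph inc).dist (Sum.inl p) (Sum.inl p') = m ∧
    (incGraph inc).dist (Sum.inr l) (Sum.inr l') = m) ∨
  ((incGraph inc).dist (Sum.inl p) (Sum.inr l') = m ∧
    (incGraph inc).dist (Sum.inr l) (Sum.inl p') = m)

/-- A collineation is domestic if it maps no chamber to an opposite chamber. -/
def IsDomesticColl {P L : Type*} (inc : P → L → Prop) (m : ℕ) (θP : Equiv.Perm P)
    (θL : Equiv.Perm L) : Prop :=
  ¬ ∃ p l, inc p l ∧ OppChambers inc m p (θP p) l (θL l)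


/-!
Work in the incidence graph: it is bipartite, of diameter `m` and girth `2m`, so geodesics of
length less than `m` are unique. Suppose the collineation `θ` is not the identity and pick a
vertex `x` whose displacement `M = d(x, θx)` is maximal. As `θ` preserves types, `M > 0` is even,
hence `M + 1 ≤ m` because `m` is odd. By uniqueness of geodesics, at most one neighbour `u` of `x`
is closer to `θx` than `x` is, and at most one has `θu` closer to `x` than `θx` is. Every neighbour
is of one of these two kinds: otherwise `d(u, θx) = d(x, θu) = M + 1`, so either `M + 1 = m` and
`θ` maps the chamber `{x, u}` to an opposite one, or `M + 1 < m` and there are two geodesics from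
`θu` to `x`, one through `u` and one through the neighbour of `x` towards `θx`. As `x` has three
neighbours, this is impossible.
-/

namespace SimpleGraph

variable {V : Type*} {G : SimpleGraph V} {u v w w' : V}

lemma Coloring.even_dist_iff (c : G.Coloring Bool) (h : G.Reachable u v) :
    Even (G.dist u v) ↔ (c u ↔ c v) := by
  obtain ⟨p, hp⟩ := h.exists_walk_length_eq_dist
  rw [← hp, c.even_length_iff_congr]

lemma Coloring.dist_add_one_eq_or_of_adj (c : G.Coloring Bool) (hc : G.Connected)
    (h : G.Adj v w) (u : V) :
    G.dist u w + 1 = G.dist u v ∨ G.dist u w = G.dist u v + 1 := by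
  have hvw : c v ≠ c w := c.valid h
  have hv := c.even_dist_iff (hc u v)
  have hw := c.even_dist_iff (hc u w)
  have hpar : Even (G.dist u v) ↔ ¬ Even (G.dist u w) := by
    rw [hv, hw]
    revert hvw
    cases c u <;> cases c v <;> cases c w <;> simp
  rw [Nat.even_iff, Nat.even_iff] at hpar
  rcases h.diff_dist_adj (u := u) with h | h | h <;> omega

lemma exists_adj_dist_add_one_eq (h : 0 < G.dist u v) :
    ∃ w, G.Adj u w ∧ G.dist w v + 1 = G.dist u v := by
  obtain ⟨p, hp⟩ := exists_walk_of_dist_ne_zero h.ne'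
  have hnil : ¬ p.Nil := by rw [Walk.not_nil_iff_lt_length]; omega
  have hadj := p.adj_snd hnil
  refine ⟨p.snd, hadj, le_antisymm ?_ ?_⟩
  · have := dist_le p.tail
    have := p.length_tail_add_one hnil
    omega
  · have := hadj.reachable.dist_triangle_left v
    rw [dist_eq_one_iff_adj.mpr hadj] at this
    omega

lemma Walk.IsPath.eq_of_length_add_length_lt_egirth {p q : G.Walk u v} (hp : p.IsPath)
    (hq : q.IsPath) (h : ((p.length + q.length : ℕ) : ℕ∞) < G.egirth) : p = q := by
  by_contra hne
  obtain ⟨_, _, _, c, hc, hle⟩ := hp.exists_isCycle_length_le_add_of_ne hq hne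
  exact (egirth_le_length hc).not_gt (lt_of_le_of_lt (by exact_mod_cast hle) h)

lemma Walk.eq_of_length_eq_dist {p q : G.Walk u v} (hp : p.length = G.dist u v)
    (hq : q.length = G.dist u v) (h : 2 * (G.dist u v : ℕ∞) < G.egirth) : p = q :=
  (p.isPath_of_length_eq_dist hp).eq_of_length_add_length_lt_egirth
    (q.isPath_of_length_eq_dist hq) (by rw [hp, hq, ← two_mul]; exact_mod_cast h)

lemma eq_of_adj_of_dist_add_one_eq (hw : G.Adj w v) (hw' : G.Adj w' v)
    (h : G.dist u w + 1 = G.dist u v) (h' : G.dist u w' + 1 = G.dist u v)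
    (hg : 2 * (G.dist u v : ℕ∞) < G.egirth) : w = w' := by
  have huv : G.Reachable u v := Reachable.of_dist_ne_zero (by omega)
  obtain ⟨p, hp⟩ := (huv.trans hw.symm.reachable).exists_walk_length_eq_dist
  obtain ⟨q, hq⟩ := (huv.trans hw'.symm.reachable).exists_walk_length_eq_dist
  have := Walk.eq_of_length_eq_dist (p := p.concat hw) (q := q.concat hw')
    (by rw [Walk.length_concat, hp, h]) (by rw [Walk.length_concat, hq, h']) hg
  exact (Walk.concat_inj this).1

/-- `Θ` maps no chamber (edge) `{x, y}` to an opposite one, opposition of chambers being read as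
for odd `m`: `x` is opposite `Θ y` and `y` is opposite `Θ x`. -/
def Iso.IsDomestic (Θ : G ≃g G) (m : ℕ) : Prop :=
  ∀ ⦃x y⦄, G.Adj x y → ¬ (G.dist x (Θ y) = m ∧ G.dist y (Θ x) = m)

lemma Iso.exists_forall_dist_apply_le {m : ℕ} [Nonempty V] (Θ : G ≃g G)
    (hdiam : ∀ x y, G.dist x y ≤ m) :
    ∃ x, ∀ y, G.dist y (Θ y) ≤ G.dist x (Θ x) := by
  obtain ⟨_, ⟨x, rfl⟩, hmax⟩ := BddAbove.exists_isGreatest_of_nonempty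
    (S := Set.range fun y => G.dist y (Θ y)) ⟨m, by rintro _ ⟨y, rfl⟩; exact hdiam _ _⟩
    (Set.range_nonempty _)
  exact ⟨x, fun y => hmax ⟨y, rfl⟩⟩

variable {m : ℕ} {Θ : G ≃g G} {x : V}

lemma Iso.egirth_le_of_dist_eq_add_one (hc : G.Connected)
    (hmax : ∀ y, G.dist y (Θ y) ≤ G.dist x (Θ x)) (hpos : 0 < G.dist x (Θ x)) (hu : G.Adj x u)
    (hux : G.dist u (Θ x) = G.dist x (Θ x) + 1) (hxu : G.dist x (Θ u) = G.dist x (Θ x) + 1) :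
    G.egirth ≤ 2 * ((G.dist x (Θ x) + 1 : ℕ) : ℕ∞) := by
  set M := G.dist x (Θ x)
  obtain ⟨x₁, hx₁, hx₁M⟩ := exists_adj_dist_add_one_eq hpos
  have hΘ : G.dist (Θ u) (Θ x) = 1 := dist_eq_one_iff_adj.mpr (Θ.map_adj_iff.mpr hu.symm)
  have hx₁x : G.dist x₁ x = 1 := dist_eq_one_iff_adj.mpr hx₁.symm
  have hΘxx₁ : G.dist (Θ x) x₁ + 1 = M := by rwa [dist_comm]
  have hΘux : G.dist (Θ u) x = M + 1 := by rw [dist_comm, hxu]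
  have hΘuu : G.dist (Θ u) u = M := by
    have := hmax u
    have := hc.dist_triangle (u := u) (v := Θ u) (w := Θ x)
    rw [dist_comm]
    omega
  have hΘux₁ : G.dist (Θ u) x₁ = M := by
    have := hc.dist_triangle (u := Θ u) (v := Θ x) (w := x₁)
    have := hc.dist_triangle (u := Θ u) (v := x₁) (w := x)
    omega
  by_contra! hlt
  -- `u` and `x₁` are both neighbours of `x` on geodesics from `Θ u`, which are unique.
  obtain rfl : u = x₁ := eq_of_adj_of_dist_add_one_eq (u := Θ u) hu.symm hx₁.symm
    (by omega) (by omega) (by rwa [hΘux])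
  omega

lemma Iso.IsDomestic.dist_add_one_eq_or (hdom : Θ.IsDomestic m) (hc : G.Connected)
    (c : G.Coloring Bool) (hgirth : 2 * (m : ℕ∞) ≤ G.egirth)
    (hmax : ∀ y, G.dist y (Θ y) ≤ G.dist x (Θ x)) (hpos : 0 < G.dist x (Θ x))
    (hm : G.dist x (Θ x) + 1 ≤ m) (hu : G.Adj x u) :
    G.dist (Θ x) u + 1 = G.dist (Θ x) x ∨ G.dist x (Θ u) + 1 = G.dist x (Θ x) := by
  rcases c.dist_add_one_eq_or_of_adj hc hu (Θ x) with hux | hux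
  · exact .inl hux
  rcases c.dist_add_one_eq_or_of_adj hc (Θ.map_adj_iff.mpr hu) x with hxu | hxu
  · exact .inr hxu
  rw [dist_comm, dist_comm (u := Θ x)] at hux
  rcases hm.lt_or_eq with hlt | heq
  · have hle := Θ.egirth_le_of_dist_eq_add_one hc hmax hpos hu hux hxu
    have : 2 * ((G.dist x (Θ x) + 1 : ℕ) : ℕ∞) < 2 * m := by
      exact_mod_cast (by omega : 2 * (G.dist x (Θ x) + 1) < 2 * m)
    exact ((hgirth.trans hle).not_gt this).elim
  · exact absurd ⟨hxu.trans heq, hux.trans heq⟩ (hdom hu)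

theorem Iso.apply_eq_self_of_isDomestic (hc : G.Connected) (hm : Odd m)
    (hdiam : ∀ x y, G.dist x y ≤ m) (hgirth : 2 * (m : ℕ∞) ≤ G.egirth)
    (hthick : ∀ x, ∃ y₁ y₂ y₃, G.Adj x y₁ ∧ G.Adj x y₂ ∧ G.Adj x y₃ ∧
      y₁ ≠ y₂ ∧ y₁ ≠ y₃ ∧ y₂ ≠ y₃)
    (c : G.Coloring Bool) (hΘc : ∀ x, c (Θ x) = c x) (hdom : Θ.IsDomestic m) (x₀ : V) :
    Θ x₀ = x₀ := by
  by_contra hx₀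
  have : Nonempty V := ⟨x₀⟩
  obtain ⟨x, hmax⟩ := Θ.exists_forall_dist_apply_le hdiam
  set M := G.dist x (Θ x)
  have hpos : 0 < M := (hc.pos_dist_of_ne (Ne.symm hx₀)).trans_le (hmax x₀)
  have hM : M + 1 ≤ m := by
    have hMeven : Even M := (c.even_dist_iff (hc _ _)).mpr (by rw [hΘc])
    have := hdiam x (Θ x)
    obtain ⟨k, hk⟩ := hMeven
    obtain ⟨j, hj⟩ := hm
    omega
  have h2M : 2 * (M : ℕ∞) < G.egirth :=
    hgirth.trans_lt' (by exact_mod_cast (by omega : 2 * M < 2 * m))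
  have hA : ∀ u u', G.Adj x u → G.Adj x u' → G.dist (Θ x) u + 1 = G.dist (Θ x) x →
      G.dist (Θ x) u' + 1 = G.dist (Θ x) x → u = u' := fun u u' hu hu' h h' =>
    eq_of_adj_of_dist_add_one_eq hu.symm hu'.symm h h' (by rwa [dist_comm])
  have hB : ∀ u u', G.Adj x u → G.Adj x u' → G.dist x (Θ u) + 1 = M →
      G.dist x (Θ u') + 1 = M → u = u' := fun u u' hu hu' h h' =>
    Θ.injective <| eq_of_adj_of_dist_add_one_eq (Θ.map_adj_iff.mpr hu).symm
      (Θ.map_adj_iff.mpr hu').symm h h' h2M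
  have key := fun u (hu : G.Adj x u) => hdom.dist_add_one_eq_or hc c hgirth hmax hpos hM hu
  obtain ⟨y₁, y₂, y₃, h₁, h₂, h₃, h₁₂, h₁₃, h₂₃⟩ := hthick x
  rcases key y₁ h₁ with k₁ | k₁ <;> rcases key y₂ h₂ with k₂ | k₂ <;>
    rcases key y₃ h₃ with k₃ | k₃ <;>
    first
    | exact h₁₂ (hA _ _ h₁ h₂ k₁ k₂) | exact h₁₂ (hB _ _ h₁ h₂ k₁ k₂)
    | exact h₁₃ (hA _ _ h₁ h₃ k₁ k₃) | exact h₁₃ (hB _ _ h₁ h₃ k₁ k₃)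
    | exact h₂₃ (hA _ _ h₂ h₃ k₂ k₃) | exact h₂₃ (hB _ _ h₂ h₃ k₂ k₃)

end SimpleGraph

section IncidenceGeometry

variable {P L : Type*} {inc : P → L → Prop}

@[simp] lemma incGraph_adj_inl_inr {p : P} {l : L} :
    (incGraph inc).Adj (.inl p) (.inr l) ↔ inc p l := by
  simp [incGraph]

@[simp] lemma incGraph_adj_inr_inl {p : P} {l : L} :
    (incGraph inc).Adj (.inr l) (.inl p) ↔ inc p l := by
  simp [incGraph]

@[simp] lemma incGraph_not_adj_inl_inl {p p' : P} : ¬ (incGraph inc).Adj (.inl p) (.inl p') := by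
  simp [incGraph]

@[simp] lemma incGraph_not_adj_inr_inr {l l' : L} : ¬ (incGraph inc).Adj (.inr l) (.inr l') := by
  simp [incGraph]

def incGraphColoring (inc : P → L → Prop) : (incGraph inc).Coloring Bool :=
  Coloring.mk Sum.isLeft <| by rintro (_ | _) (_ | _) <;> simp

def IsCollineation.toIso {θP : Equiv.Perm P} {θL : Equiv.Perm L}
    (h : IsCollineation inc θP θL) : incGraph inc ≃g incGraph inc where
  toEquiv := Equiv.sumCongr θP θL
  map_rel_iff' := by rintro (_ | _) (_ | _) <;> simp <;> exact (h _ _).symm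

lemma IsThick.exists_three_adj (h : IsThick inc) (x : P ⊕ L) :
    ∃ y₁ y₂ y₃, (incGraph inc).Adj x y₁ ∧ (incGraph inc).Adj x y₂ ∧ (incGraph inc).Adj x y₃ ∧
      y₁ ≠ y₂ ∧ y₁ ≠ y₃ ∧ y₂ ≠ y₃ := by
  rcases x with p | l
  · obtain ⟨l₁, l₂, l₃, h₁, h₂, h₃, h₁₂, h₁₃, h₂₃⟩ := h.1 p
    exact ⟨.inr l₁, .inr l₂, .inr l₃, by simp [*]⟩
  · obtain ⟨p₁, p₂, p₃, h₁, h₂, h₃, h₁₂, h₁₃, h₂₃⟩ := h.2 l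
    exact ⟨.inl p₁, .inl p₂, .inl p₃, by simp [*]⟩

lemma IsGenPolygon.two_mul_le_egirth {m : ℕ} (h : IsGenPolygon m inc) :
    2 * (m : ℕ∞) ≤ (incGraph inc).egirth := by
  rcases eq_or_ne (incGraph inc).egirth ⊤ with htop | htop
  · simp [htop]
  · rw [← ENat.natCast_toNat htop, ← girth, h.girth_eq]
    push_cast
    rfl

lemma IsCollineation.isDomestic_toIso {m : ℕ} {θP : Equiv.Perm P} {θL : Equiv.Perm L}
    (h : IsCollineation inc θP θL) (hdom : IsDomesticColl inc m θP θL) :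
    h.toIso.IsDomestic m := by
  rintro (p | l) (p' | l') hadj ⟨h₁, h₂⟩ <;>
    simp only [incGraph_adj_inl_inr, incGraph_adj_inr_inl, incGraph_not_adj_inl_inl,
      incGraph_not_adj_inr_inr] at hadj
  · exact hdom ⟨p, l', hadj, .inr ⟨h₁, h₂⟩⟩
  · exact hdom ⟨p', l, hadj, .inr ⟨h₂, h₁⟩⟩

end IncidenceGeometry

theorem no_domestic_collineation_odd_gon_general {P L : Type*} (n : ℕ)
    (inc : P → L → Prop) (hpoly : IsGenPolygon (2 * n + 1) inc) (hthick : IsThick inc)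
    (θP : Equiv.Perm P) (θL : Equiv.Perm L) (hcoll : IsCollineation inc θP θL)
    (hnontriv : ¬ ((∀ p, θP p = p) ∧ (∀ l, θL l = l))) :
    ¬ IsDomesticColl inc (2 * n + 1) θP θL := by
  intro hdom
  have hfix := hcoll.toIso.apply_eq_self_of_isDomestic hpoly.connected (odd_two_mul_add_one n)
    hpoly.dist_le hpoly.two_mul_le_egirth hthick.exists_three_adj (incGraphColoring inc)
    (by rintro (_ | _) <;> rfl) (hcoll.isDomestic_toIso hdom)
  exact hnontriv ⟨fun p => Sum.inl_injective (hfix (.inl p)),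
    fun l => Sum.inr_injective (hfix (.inr l))⟩

/-- No (nontrivial) collineation of a thick generalised `(2n+1)`-gon is domestic. -/
theorem no_domestic_collineation_odd_gon {P L : Type*} (n : ℕ) (hn : 1 ≤ n)
    (inc : P → L → Prop) (hpoly : IsGenPolygon (2 * n + 1) inc) (hthick : IsThick inc)
    (θP : Equiv.Perm P) (θL : Equiv.Perm L) (hcoll : IsCollineation inc θP θL)
    (hnontriv : ¬ ((∀ p, θP p = p) ∧ (∀ l, θL l = l))) :
    ¬ IsDomesticColl inc (2 * n + 1) θP θL :=
  no_domestic_collineation_odd_gon_general n inc hpoly hthick θP θL hcoll hnontriv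
end

section
/- Let s,t ≥ 2 be integers. If t³(st + s² + 1) is divisible by (s² + st + t²) and s = t³, then we reach a contradiction; i.e. for no t ≥ 2 is t³ − t(t²−1)/(t⁴+t²+1) an integer. Consequently, a finite thick generalised hexagon with parameters (t³, t) admits no central collineation. -/
/-- For no `t ≥ 2` does `(s² + st + t²)` divide `t³(st + s² + 1)` when `s = t³`; consequently
a finite thick generalised hexagon with parameters `(t³, t)` admits no central collineation. -/
theorem no_central_collineation_s_eq_t_cubed (t s : ℕ) (ht : 2 ≤ t) (hs : s = t ^ 3) :
    ¬ (s ^ 2 + s * t + t ^ 2 ∣ t ^ 3 * (s * t + s ^ 2 + 1)) := by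
  subst hs
  rintro ⟨k, hk⟩
  ring_nf at hk
  rcases lt_or_ge k (t ^ 3) with h | h
  · nlinarith [pow_pos (by omega : 0 < t) 2, pow_pos (by omega : 0 < t) 4,
      pow_pos (by omega : 0 < t) 6, Nat.pow_le_pow_left ht 5]
  · have h1 : t ^ 2 * t ^ 3 ≤ t ^ 2 * k := Nat.mul_le_mul_left _ h
    have h2 : t ^ 4 * t ^ 3 ≤ t ^ 4 * k := Nat.mul_le_mul_left _ h
    have h3 : t ^ 6 * t ^ 3 ≤ t ^ 6 * k := Nat.mul_le_mul_left _ h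
    have h5 : t ^ 3 < t ^ 5 := Nat.pow_lt_pow_right (by omega) (by norm_num)
    nlinarith [h1, h2, h3, h5]
end
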